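/- Let A and Ã be 2×4 real matrices, each of rank 2, and suppose there is a nonzero real constant c such that for all column indices i < j the minors satisfy A_{ij} = c * Ã_{ij} (i.e. the Plücker coordinates of the two sets of boundary conditions are identical as projective tuples). Then for every vector X ∈ ℝ⁴, A.mulVec X = 0 if and only if Ã.mulVec X = 0. -/

import Mathlib

/-!
A nonzero minor `A_{pq}` lets one solve, by Cramer's rule in the columns `p, q`, for each row of
`Ã` as a combination of the rows of `A`: the proportionality of the minors makes the `3 × 3`
determinants formed by a row of `Ã` and the two rows of `A` vanish. So `Ã = C A` for a `2 × 2`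
matrix `C`, whence `Ã_{ij} = det C · A_{ij}`, so `c · det C = 1`, and `C` is invertible.
-/

/-- The 2×2 minor of a 2×4 matrix formed by columns `i` and `j`. -/
def minor (M : Matrix (Fin 2) (Fin 4) ℝ) (i j : Fin 4) : ℝ :=
  M 0 i * M 1 j - M 0 j * M 1 i

section

variable (M : Matrix (Fin 2) (Fin 4) ℝ)

theorem minor_swap (i j : Fin 4) : minor M j i = -minor M i j := by
  unfold minor; ring

theorem minor_self (i : Fin 4) : minor M i i = 0 := by
  unfold minor; ring

theorem minor_mul (C : Matrix (Fin 2) (Fin 2) ℝ) (i j : Fin 4) :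
    minor (C * M) i j = C.det * minor M i j := by
  simp only [minor, Matrix.mul_apply, Fin.sum_univ_two, Matrix.det_fin_two]
  ring

/-- Laplace expansion of a `3 × 3` determinant whose first row repeats a row of `M`. -/
theorem row_mul_minor_sub_add_eq_zero (r : Fin 2) (k p q : Fin 4) :
    M r k * minor M p q - M r p * minor M k q + M r q * minor M k p = 0 := by
  fin_cases r <;> simp only [minor, Fin.zero_eta, Fin.mk_one] <;> ring

theorem exists_minor_ne_zero_of_rank_eq_two (hM : M.rank = 2) : ∃ p q, minor M p q ≠ 0 := by
  have hli : LinearIndependent ℝ ![M 0, M 1] := by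
    rw [M.rank_eq_finrank_span_row] at hM
    have hrows : ![M 0, M 1] = M.row := by ext i : 1; fin_cases i <;> rfl
    rw [hrows, linearIndependent_iff_card_eq_finrank_span, Fintype.card_fin]
    exact hM.symm
  by_contra! h
  by_cases h0 : M 0 = 0
  · exact one_ne_zero (LinearIndependent.pair_iff.mp hli 1 0 (by simp [h0])).1
  · obtain ⟨p, hp⟩ := Function.ne_iff.mp h0
    have hrel : M 1 p • M 0 + (-M 0 p) • M 1 = 0 := by
      ext k
      have hpk := h p k
      simp only [minor] at hpk
      simp only [Pi.add_apply, Pi.smul_apply, smul_eq_mul, Pi.zero_apply]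
      linear_combination -hpk
    exact hp (neg_eq_zero.mp (LinearIndependent.pair_iff.mp hli _ _ hrel).2)

end

theorem minor_eq_mul_of_forall_lt {A B : Matrix (Fin 2) (Fin 4) ℝ} {c : ℝ}
    (h : ∀ i j, i < j → minor A i j = c * minor B i j) (i j : Fin 4) :
    minor A i j = c * minor B i j := by
  rcases lt_trichotomy i j with hij | rfl | hij
  · exact h i j hij
  · simp [minor_self]
  · rw [minor_swap, minor_swap B, h j i hij, mul_neg]

theorem exists_eq_mul_of_minor_eq_mul {A B : Matrix (Fin 2) (Fin 4) ℝ} {c : ℝ}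
    (h : ∀ i j, minor A i j = c * minor B i j) {p q : Fin 4} (hpq : minor A p q ≠ 0) :
    ∃ C : Matrix (Fin 2) (Fin 2) ℝ, B = C * A := by
  refine ⟨Matrix.of fun r => ![(B r p * A 1 q - B r q * A 1 p) / minor A p q,
    (A 0 p * B r q - A 0 q * B r p) / minor A p q], ?_⟩
  ext r k
  have hB : B r k * minor A p q - B r p * minor A k q + B r q * minor A k p = 0 := by
    rw [h, h, h]
    linear_combination c * row_mul_minor_sub_add_eq_zero B r k p q
  simp only [Matrix.mul_apply, Fin.sum_univ_two, Matrix.of_apply, Matrix.cons_val_zero,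
    Matrix.cons_val_one]
  field_simp
  simp only [minor] at hB ⊢
  linear_combination hB

theorem same_solutions_of_proportional_minors_general
    (A Atilde : Matrix (Fin 2) (Fin 4) ℝ)
    (hrA : A.rank = 2)
    (c : ℝ)
    (hminors : ∀ i j : Fin 4, i < j → minor A i j = c * minor Atilde i j) :
    ∀ X : Fin 4 → ℝ, A.mulVec X = 0 ↔ Atilde.mulVec X = 0 := by
  have hm := minor_eq_mul_of_forall_lt hminors
  obtain ⟨p, q, hpq⟩ := exists_minor_ne_zero_of_rank_eq_two A hrA
  obtain ⟨C, rfl⟩ := exists_eq_mul_of_minor_eq_mul hm hpq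
  have hC : IsUnit C := by
    refine (Matrix.isUnit_iff_isUnit_det C).mpr (IsUnit.of_mul_eq_one_right c ?_)
    have hpq' := hm p q
    rw [minor_mul, ← mul_assoc] at hpq'
    exact (mul_eq_right₀ hpq).mp hpq'.symm
  intro X
  rw [← Matrix.mulVec_mulVec]
  exact ((Matrix.mulVec_injective_of_isUnit hC).eq_iff' (Matrix.mulVec_zero C)).symm

theorem same_solutions_of_proportional_minors
    (A Atilde : Matrix (Fin 2) (Fin 4) ℝ)
    (hrA : A.rank = 2) (hrAt : Atilde.rank = 2)
    (c : ℝ) (hc : c ≠ 0)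
    (hminors : ∀ i j : Fin 4, i < j → minor A i j = c * minor Atilde i j) :
    ∀ X : Fin 4 → ℝ, A.mulVec X = 0 ↔ Atilde.mulVec X = 0 :=
  same_solutions_of_proportional_minors_general A Atilde hrA c hminors
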